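/- arXiv:1804.01406 — 4 statements merged into one kernel-verified Lean document; each statement's English description precedes it below -/
import Mathlib

section
/- Let n, l ≥ 1, let α ∈ (ℝ₊*)^n and β ∈ (ℝ₊*)^l satisfy Σᵢ αᵢ = Σⱼ βⱼ, and let Z be an l×n matrix with strictly positive entries. Then B(α)^{-1} Φ(α,β,Z) = B(β)^{-1} Φ(β,α,Zᵗ), where Zᵗ is the transpose of Z. -/
/-!
Writing `Γ(b) w^{-b} = ∫₀^∞ t^{b-1} e^{-wt} dt` for each factor and passing to the polar
coordinates `t = s • v` (`s > 0`, `v` in the simplex) on the positive orthant gives the Dirichlet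
formula `∏ Γ(βⱼ) wⱼ^{-βⱼ} = Γ(∑ βⱼ) ∫_Δ ∏ vⱼ^{βⱼ-1} ⟨v, w⟩^{-∑ βⱼ} dv`. With `w = Z u` it turns
`(∏ Γ(βⱼ)) Φ(α, β, Z)` into `Γ(∑ βⱼ)` times the integral over `Δ^{(n+1)} × Δ^{(l+1)}` of
`∏ uᵢ^{αᵢ-1} ∏ vⱼ^{βⱼ-1} (vᵗ Z u)^{-∑ βⱼ}`, which is symmetric under `(α, u, Z) ↔ (β, v, Zᵗ)` once
`∑ αᵢ = ∑ βⱼ`. Working with `ℝ≥0∞`-valued integrals, Tonelli applies without any integrability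
check.
-/

open MeasureTheory

/-- Extension of `u ∈ ℝ^n` to a vector in `ℝ^{n+1}` whose last coordinate is `1 - ∑ uᵢ`;
the open simplex `Δ^{(n+1)}` corresponds to all coordinates of the extension being positive. -/
noncomputable def simplexExt {n : ℕ} (u : Fin n → ℝ) : Fin (n + 1) → ℝ :=
  Fin.snoc u (1 - ∑ i, u i)

/-- The hypergeometric function `Φ(α, β; Z)`. -/
noncomputable def Phi (n l : ℕ) (α : Fin (n + 1) → ℝ) (β : Fin l → ℝ)
    (Z : Matrix (Fin l) (Fin (n + 1)) ℝ) : ℝ :=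
  ∫ u in {u : Fin n → ℝ | ∀ i, 0 < simplexExt u i},
    (∏ i, simplexExt u i ^ (α i - 1)) * ∏ j, (Z.mulVec (simplexExt u) j) ^ (-β j)

/-- The multivariate Beta function `B(α) = ∏ Γ(αᵢ) / Γ(∑ αᵢ)`. -/
noncomputable def Bfun {n : ℕ} (α : Fin n → ℝ) : ℝ :=
  (∏ i, Real.Gamma (α i)) / Real.Gamma (∑ i, α i)

open Set
open scoped ENNReal Matrix

section SimplexExt

variable {m : ℕ}

@[simp]
lemma simplexExt_castSucc (u : Fin m → ℝ) (i : Fin m) : simplexExt u i.castSucc = u i := by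
  simp [simplexExt]

@[simp]
lemma simplexExt_last (u : Fin m → ℝ) : simplexExt u (Fin.last m) = 1 - ∑ i, u i := by
  simp [simplexExt]

lemma sum_simplexExt (u : Fin m → ℝ) : ∑ i, simplexExt u i = 1 := by
  simp [Fin.sum_univ_castSucc]

@[fun_prop]
lemma measurable_simplexExt : Measurable (simplexExt (n := m)) := by
  refine measurable_pi_iff.2 fun i => Fin.lastCases ?_ (fun j => ?_) i
  · simp only [simplexExt_last]
    fun_prop
  · simp only [simplexExt_castSucc]
    fun_prop

def openSimplex (m : ℕ) : Set (Fin m → ℝ) := {u | ∀ i, 0 < simplexExt u i}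

lemma measurableSet_openSimplex (m : ℕ) : MeasurableSet (openSimplex m) := by
  simp only [openSimplex, ofPred_forall]
  exact MeasurableSet.iInter fun i => measurableSet_lt measurable_const (by fun_prop)

end SimplexExt

noncomputable section SimplexCone

variable {m : ℕ}

def simplexExtLin (m : ℕ) : (Fin (m + 1) → ℝ) →ₗ[ℝ] (Fin (m + 1) → ℝ) where
  toFun v := Fin.snoc (Fin.init v) (-∑ i, Fin.init v i)
  map_add' x y := by
    ext i
    refine Fin.lastCases ?_ (fun k => ?_) i <;> simp [Fin.init, Finset.sum_add_distrib]; ring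
  map_smul' c x := by
    ext i
    refine Fin.lastCases ?_ (fun k => ?_) i <;> simp [Fin.init, Finset.mul_sum]

lemma simplexExt_init (w : Fin (m + 1) → ℝ) :
    simplexExt (Fin.init w) = simplexExtLin m w + Pi.single (Fin.last m) 1 := by
  ext i
  refine Fin.lastCases ?_ (fun k => ?_) i
  · simp [simplexExtLin]
    ring
  · simp [simplexExtLin, (Fin.castSucc_lt_last k).ne]

/-- Polar coordinates adapted to the simplex: `(u, s) ↦ s • simplexExt u`, with `s` stored in the
last coordinate. -/
def simplexCone (m : ℕ) (w : Fin (m + 1) → ℝ) : Fin (m + 1) → ℝ :=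
  w (Fin.last m) • simplexExt (Fin.init w)

def simplexConeDeriv (m : ℕ) (w : Fin (m + 1) → ℝ) : (Fin (m + 1) → ℝ) →L[ℝ] (Fin (m + 1) → ℝ) :=
  w (Fin.last m) • (simplexExtLin m).toContinuousLinearMap +
    (ContinuousLinearMap.proj (Fin.last m)).smulRight (simplexExt (Fin.init w))

lemma hasFDerivAt_simplexCone (w : Fin (m + 1) → ℝ) :
    HasFDerivAt (simplexCone m) (simplexConeDeriv m w) w := by
  have hext : HasFDerivAt (fun w : Fin (m + 1) → ℝ => simplexExt (Fin.init w))
      (simplexExtLin m).toContinuousLinearMap w := by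
    simp only [simplexExt_init]
    exact (simplexExtLin m).toContinuousLinearMap.hasFDerivAt.add_const _
  exact (ContinuousLinearMap.proj (R := ℝ) (φ := fun _ => ℝ) (Fin.last m)).hasFDerivAt.smul hext

lemma simplexConeDeriv_apply_castSucc (w v : Fin (m + 1) → ℝ) (a : Fin m) :
    simplexConeDeriv m w v a.castSucc =
      w (Fin.last m) * v a.castSucc + v (Fin.last m) * w a.castSucc := by
  simp [simplexConeDeriv, simplexExtLin, Fin.init]

lemma sum_simplexConeDeriv_apply (w v : Fin (m + 1) → ℝ) :
    ∑ i, simplexConeDeriv m w v i = v (Fin.last m) := by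
  have hlin : ∑ i, simplexExtLin m v i = 0 := by
    simp [simplexExtLin, Fin.sum_univ_castSucc]
  simp [simplexConeDeriv, Finset.sum_add_distrib, ← Finset.mul_sum, hlin, sum_simplexExt]

/-- Adding all rows to the last one makes the Jacobian matrix upper triangular, since the
coordinates of `simplexCone m w` sum to `w (Fin.last m)`. -/
lemma det_simplexConeDeriv (w : Fin (m + 1) → ℝ) :
    (simplexConeDeriv m w).det = w (Fin.last m) ^ m := by
  set M := LinearMap.toMatrix' ((simplexConeDeriv m w).toLinearMap)
  have hM (a : Fin m) (j : Fin (m + 1)) : M a.castSucc j =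
      w (Fin.last m) * Pi.single (M := fun _ => ℝ) j 1 a.castSucc +
        Pi.single (M := fun _ => ℝ) j 1 (Fin.last m) * w a.castSucc := by
    simp [M, LinearMap.toMatrix'_apply, simplexConeDeriv_apply_castSucc]
  have hrows : ∑ k, M k = Pi.single (Fin.last m) 1 := by
    ext j
    refine (Finset.sum_apply j _ fun k => M k).trans ?_
    simp only [M, LinearMap.toMatrix'_apply, ContinuousLinearMap.coe_coe,
      sum_simplexConeDeriv_apply, Pi.single_apply, eq_comm]
  have hdet := Matrix.det_updateRow_sum M (Fin.last m) 1
  simp only [Pi.one_apply, one_smul, hrows] at hdet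
  rw [ContinuousLinearMap.det, ← LinearMap.det_toMatrix', ← hdet,
    Matrix.det_of_isUpperTriangular, Fin.prod_univ_castSucc]
  · simp [hM, (Fin.castSucc_lt_last _).ne]
  · intro i j (hji : j < i)
    induction i using Fin.lastCases with
    | last => simp [hji.ne]
    | cast a => simp [hM, hji.ne, (hji.trans (Fin.castSucc_lt_last a)).ne]

def simplexConeDomain (m : ℕ) : Set (Fin (m + 1) → ℝ) :=
  {w | 0 < w (Fin.last m) ∧ Fin.init w ∈ openSimplex m}

def simplexConeInv (m : ℕ) (x : Fin (m + 1) → ℝ) : Fin (m + 1) → ℝ :=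
  Fin.snoc (fun i => x i.castSucc / ∑ j, x j) (∑ j, x j)

lemma simplexCone_castSucc (w : Fin (m + 1) → ℝ) (i : Fin m) :
    simplexCone m w i.castSucc = w (Fin.last m) * w i.castSucc := by
  simp [simplexCone, Fin.init]

lemma sum_simplexCone (w : Fin (m + 1) → ℝ) : ∑ i, simplexCone m w i = w (Fin.last m) := by
  simp [simplexCone, ← Finset.mul_sum, sum_simplexExt]

lemma simplexConeInv_simplexCone {w : Fin (m + 1) → ℝ} (hw : w (Fin.last m) ≠ 0) :
    simplexConeInv m (simplexCone m w) = w := by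
  ext i
  induction i using Fin.lastCases with
  | last => simp [simplexConeInv, sum_simplexCone]
  | cast k => simp [simplexConeInv, sum_simplexCone, simplexCone_castSucc, hw]

lemma simplexCone_simplexConeInv {x : Fin (m + 1) → ℝ} (hx : ∑ j, x j ≠ 0) :
    simplexCone m (simplexConeInv m x) = x := by
  ext i
  induction i using Fin.lastCases with
  | last =>
    have hsplit := Fin.sum_univ_castSucc x
    simp only [simplexCone, simplexConeInv, Fin.snoc_last, Fin.init_snoc, Pi.smul_apply,
      simplexExt_last, smul_eq_mul, ← Finset.sum_div]
    rw [mul_sub, mul_div_cancel₀ _ hx]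
    linarith
  | cast k => simp [simplexCone, simplexConeInv, mul_div_cancel₀ _ hx]

lemma injOn_simplexCone : InjOn (simplexCone m) (simplexConeDomain m) := fun w hw w' hw' h => by
  rw [← simplexConeInv_simplexCone hw.1.ne', h, simplexConeInv_simplexCone hw'.1.ne']

lemma image_simplexCone_simplexConeDomain :
    simplexCone m '' simplexConeDomain m = Set.univ.pi fun _ => Ioi 0 := by
  ext x
  simp only [mem_univ_pi, mem_Ioi, mem_image]
  constructor
  · rintro ⟨w, hw, rfl⟩ i
    exact mul_pos hw.1 (hw.2 i)
  · intro hx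
    have hS : 0 < ∑ j, x j := Finset.sum_pos (fun j _ => hx j) Finset.univ_nonempty
    refine ⟨simplexConeInv m x, ⟨by simpa [simplexConeInv] using hS, fun i => ?_⟩,
      simplexCone_simplexConeInv hS.ne'⟩
    have hxi := congrFun (simplexCone_simplexConeInv hS.ne') i
    simp only [simplexCone, simplexConeInv, Fin.snoc_last, Pi.smul_apply, smul_eq_mul] at hxi
    exact pos_of_mul_pos_right (hxi ▸ hx i) hS.le

lemma simplexConeDomain_eq_preimage (m : ℕ) : simplexConeDomain m =
    MeasurableEquiv.piFinSuccAbove (fun _ => ℝ) (Fin.last m) ⁻¹' (Ioi 0 ×ˢ openSimplex m) := by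
  ext w
  simp [simplexConeDomain, MeasurableEquiv.piFinSuccAbove_apply]

lemma measurableSet_simplexConeDomain (m : ℕ) : MeasurableSet (simplexConeDomain m) := by
  rw [simplexConeDomain_eq_preimage]
  exact (MeasurableEquiv.measurable _) (measurableSet_Ioi.prod (measurableSet_openSimplex m))

end SimplexCone

theorem lintegral_orthant_eq_lintegral_openSimplex_lintegral_Ioi {m : ℕ}
    (g : (Fin (m + 1) → ℝ) → ℝ≥0∞) (hg : Measurable g) :
    ∫⁻ x in Set.univ.pi (fun _ => Ioi 0), g x =
      ∫⁻ u in openSimplex m, ∫⁻ s in Ioi 0, ENNReal.ofReal (s ^ m) * g (s • simplexExt u) := by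
  set e := MeasurableEquiv.piFinSuccAbove (fun _ : Fin (m + 1) => ℝ) (Fin.last m)
  set F : ℝ × (Fin m → ℝ) → ℝ≥0∞ := fun p => ENNReal.ofReal (p.1 ^ m) * g (p.1 • simplexExt p.2)
  have he : ∀ w, e w = (w (Fin.last m), Fin.init w) := fun w => by
    simp [e, MeasurableEquiv.piFinSuccAbove_apply]
  have hjac : ∀ w ∈ simplexConeDomain m,
      ENNReal.ofReal |(simplexConeDeriv m w).det| * g (simplexCone m w) = F (e w) :=
    fun w hw => by rw [det_simplexConeDeriv, abs_of_pos (pow_pos hw.1 m), he]; rfl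
  have hF : Measurable F := by fun_prop
  rw [← image_simplexCone_simplexConeDomain,
    lintegral_image_eq_lintegral_abs_det_fderiv_mul volume (measurableSet_simplexConeDomain m)
      (fun w _ => (hasFDerivAt_simplexCone w).hasFDerivWithinAt) injOn_simplexCone,
    setLIntegral_congr_fun (measurableSet_simplexConeDomain m) hjac,
    simplexConeDomain_eq_preimage,
    (volume_preserving_piFinSuccAbove (fun _ => ℝ) (Fin.last m)).setLIntegral_comp_preimage_emb
      e.measurableEmbedding, Measure.volume_eq_prod, setLIntegral_prod_symm F hF.aemeasurable]

section GammaIntegral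

variable {a r : ℝ}

lemma integrableOn_rpow_mul_exp_neg_mul_Ioi (ha : 0 < a) (hr : 0 < r) :
    IntegrableOn (fun t : ℝ => t ^ (a - 1) * Real.exp (-(r * t))) (Ioi 0) := by
  simpa [Real.rpow_one] using
    integrableOn_rpow_mul_exp_neg_mul_rpow (p := 1) (by linarith) one_pos hr

lemma integral_rpow_mul_exp_neg_mul_Ioi_eq_Gamma_mul (ha : 0 < a) (hr : 0 < r) :
    ∫ t in Ioi 0, t ^ (a - 1) * Real.exp (-(r * t)) = Real.Gamma a * r ^ (-a) := by
  rw [Real.integral_rpow_mul_exp_neg_mul_Ioi ha hr, one_div, Real.inv_rpow hr.le,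
    Real.rpow_neg hr.le, mul_comm]

lemma lintegral_rpow_mul_exp_neg_mul_Ioi (ha : 0 < a) (hr : 0 < r) :
    ∫⁻ t in Ioi 0, ENNReal.ofReal (t ^ (a - 1) * Real.exp (-(r * t))) =
      ENNReal.ofReal (Real.Gamma a * r ^ (-a)) := by
  rw [← integral_rpow_mul_exp_neg_mul_Ioi_eq_Gamma_mul ha hr,
    ofReal_integral_eq_lintegral_ofReal (integrableOn_rpow_mul_exp_neg_mul_Ioi ha hr)]
  exact ae_restrict_of_forall_mem measurableSet_Ioi fun t (ht : 0 < t) => by positivity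

lemma lintegral_orthant_prod_rpow_mul_exp_neg_mul {ι : Type*} [Fintype ι] {β w : ι → ℝ}
    (hβ : ∀ i, 0 < β i) (hw : ∀ i, 0 < w i) :
    ∫⁻ t in Set.univ.pi (fun _ => Ioi 0),
        ENNReal.ofReal (∏ i, t i ^ (β i - 1) * Real.exp (-(w i * t i))) =
      ENNReal.ofReal (∏ i, Real.Gamma (β i) * w i ^ (-β i)) := by
  have hnonneg : ∀ᵐ t ∂volume.restrict (Set.univ.pi fun _ : ι => Ioi (0 : ℝ)),
      0 ≤ ∏ i, t i ^ (β i - 1) * Real.exp (-(w i * t i)) :=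
    ae_restrict_of_forall_mem (MeasurableSet.univ_pi fun _ => measurableSet_Ioi) fun t ht =>
      Finset.prod_nonneg fun i _ => by have : 0 < t i := ht i trivial; positivity
  rw [volume_pi, Measure.restrict_pi_pi] at hnonneg ⊢
  rw [← ofReal_integral_eq_lintegral_ofReal
      (Integrable.fintype_prod fun i => integrableOn_rpow_mul_exp_neg_mul_Ioi (hβ i) (hw i))
      hnonneg,
    integral_fintype_prod_eq_prod (fun i t => t ^ (β i - 1) * Real.exp (-(w i * t)))]
  simp only [integral_rpow_mul_exp_neg_mul_Ioi_eq_Gamma_mul (hβ _) (hw _)]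

end GammaIntegral

lemma pow_mul_prod_rpow_mul_exp_smul {m : ℕ} {β w x : Fin (m + 1) → ℝ} (hx : ∀ i, 0 ≤ x i)
    {s : ℝ} (hs : 0 < s) :
    s ^ m * ∏ i, (s • x) i ^ (β i - 1) * Real.exp (-(w i * (s • x) i)) =
      (∏ i, x i ^ (β i - 1)) * (s ^ (∑ i, β i - 1) * Real.exp (-((x ⬝ᵥ w) * s))) := by
  have hpow : s ^ m * ∏ i, s ^ (β i - 1) = s ^ (∑ i, β i - 1) := by
    rw [← Real.rpow_natCast, ← Real.rpow_sum_of_pos hs, ← Real.rpow_add hs, Finset.sum_sub_distrib]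
    simp only [Finset.sum_const, Finset.card_univ, Fintype.card_fin, nsmul_eq_mul, mul_one]
    push_cast
    ring_nf
  have hexp : ∏ i, Real.exp (-(w i * (s * x i))) = Real.exp (-((x ⬝ᵥ w) * s)) := by
    rw [← Real.exp_sum, dotProduct, Finset.sum_mul, ← Finset.sum_neg_distrib]
    congr 2 with i
    ring
  simp only [Pi.smul_apply, smul_eq_mul, Real.mul_rpow hs.le (hx _), Finset.prod_mul_distrib, hexp,
    ← hpow]
  ring

theorem ofReal_prod_Gamma_mul_rpow_eq_lintegral {m : ℕ} {β w : Fin (m + 1) → ℝ}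
    (hβ : ∀ i, 0 < β i) (hw : ∀ i, 0 < w i) :
    ENNReal.ofReal (∏ i, Real.Gamma (β i) * w i ^ (-β i)) =
      ENNReal.ofReal (Real.Gamma (∑ i, β i)) *
        ∫⁻ v in openSimplex m, ENNReal.ofReal
          ((∏ i, simplexExt v i ^ (β i - 1)) * (simplexExt v ⬝ᵥ w) ^ (-∑ i, β i)) := by
  have hσ : 0 < ∑ i, β i := Finset.sum_pos (fun i _ => hβ i) Finset.univ_nonempty
  rw [← lintegral_orthant_prod_rpow_mul_exp_neg_mul hβ hw,
    lintegral_orthant_eq_lintegral_openSimplex_lintegral_Ioi _ (by fun_prop),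
    ← lintegral_const_mul' _ _ ENNReal.ofReal_ne_top]
  refine setLIntegral_congr_fun (measurableSet_openSimplex m) fun v (hv : ∀ i, _) => ?_
  set x := simplexExt v
  have hP : 0 ≤ ∏ i, x i ^ (β i - 1) := Finset.prod_nonneg fun i _ => by have := hv i; positivity
  have hC : 0 < x ⬝ᵥ w := Finset.sum_pos (fun i _ => mul_pos (hv i) (hw i)) Finset.univ_nonempty
  calc ∫⁻ s in Ioi 0, ENNReal.ofReal (s ^ m) *
        ENNReal.ofReal (∏ i, (s • x) i ^ (β i - 1) * Real.exp (-(w i * (s • x) i)))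
      = ∫⁻ s in Ioi 0, ENNReal.ofReal (∏ i, x i ^ (β i - 1)) *
          ENNReal.ofReal (s ^ (∑ i, β i - 1) * Real.exp (-((x ⬝ᵥ w) * s))) :=
        setLIntegral_congr_fun measurableSet_Ioi fun s (hs : 0 < s) => by
          rw [← ENNReal.ofReal_mul (by positivity), ← ENNReal.ofReal_mul hP,
            pow_mul_prod_rpow_mul_exp_smul (fun i => (hv i).le) hs]
    _ = ENNReal.ofReal (Real.Gamma (∑ i, β i)) *
          ENNReal.ofReal ((∏ i, x i ^ (β i - 1)) * (x ⬝ᵥ w) ^ (-∑ i, β i)) := by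
        rw [lintegral_const_mul' _ _ ENNReal.ofReal_ne_top,
          lintegral_rpow_mul_exp_neg_mul_Ioi hσ hC, ← ENNReal.ofReal_mul hP,
          ← ENNReal.ofReal_mul (Real.Gamma_pos_of_pos hσ).le]
        ring_nf

lemma mulVec_pos {ι κ : Type*} [Fintype κ] [Nonempty κ] {Z : Matrix ι κ ℝ} {x : κ → ℝ}
    (hZ : ∀ j i, 0 < Z j i) (hx : ∀ i, 0 < x i) (j : ι) : 0 < (Z *ᵥ x) j :=
  Finset.sum_pos (fun i _ => mul_pos (hZ j i) (hx i)) Finset.univ_nonempty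

noncomputable section Phi

variable {n l : ℕ}

def phiIntegrand (α : Fin (n + 1) → ℝ) (β : Fin l → ℝ) (Z : Matrix (Fin l) (Fin (n + 1)) ℝ)
    (u : Fin n → ℝ) : ℝ :=
  (∏ i, simplexExt u i ^ (α i - 1)) * ∏ j, (Z *ᵥ simplexExt u) j ^ (-β j)

def dualKernel (α : Fin (n + 1) → ℝ) (β : Fin (l + 1) → ℝ)
    (Z : Matrix (Fin (l + 1)) (Fin (n + 1)) ℝ) (u : Fin n → ℝ) (v : Fin l → ℝ) : ℝ :=
  (∏ i, simplexExt u i ^ (α i - 1)) * (∏ j, simplexExt v j ^ (β j - 1)) *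
    (simplexExt v ⬝ᵥ Z *ᵥ simplexExt u) ^ (-∑ j, β j)

lemma dualKernel_transpose {α : Fin (n + 1) → ℝ} {β : Fin (l + 1) → ℝ}
    (hsum : ∑ i, α i = ∑ j, β j) (Z : Matrix (Fin (l + 1)) (Fin (n + 1)) ℝ) (u : Fin n → ℝ)
    (v : Fin l → ℝ) : dualKernel β α Zᵀ v u = dualKernel α β Z u v := by
  rw [dualKernel, dualKernel, Matrix.mulVec_transpose, dotProduct_comm, ← Matrix.dotProduct_mulVec,
    hsum, mul_comm (∏ j, _)]

lemma measurable_dualKernel (α : Fin (n + 1) → ℝ) (β : Fin (l + 1) → ℝ)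
    (Z : Matrix (Fin (l + 1)) (Fin (n + 1)) ℝ) :
    Measurable (Function.uncurry (dualKernel α β Z)) := by
  unfold Function.uncurry dualKernel Matrix.mulVec dotProduct
  fun_prop

lemma Phi_eq_toReal_lintegral {α : Fin (n + 1) → ℝ} {β : Fin l → ℝ}
    {Z : Matrix (Fin l) (Fin (n + 1)) ℝ} (hZ : ∀ j i, 0 < Z j i) :
    Phi n l α β Z = (∫⁻ u in openSimplex n, ENNReal.ofReal (phiIntegrand α β Z u)).toReal := by
  show ∫ u in openSimplex n, phiIntegrand α β Z u = _
  refine integral_eq_lintegral_of_nonneg_ae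
    (ae_restrict_of_forall_mem (measurableSet_openSimplex n) fun u (hu : ∀ i, _) => ?_) ?_
  · have := mulVec_pos hZ hu
    exact mul_nonneg (Finset.prod_nonneg fun i _ => by have := hu i; positivity)
      (Finset.prod_nonneg fun j _ => by have := this j; positivity)
  · unfold phiIntegrand Matrix.mulVec dotProduct
    fun_prop

end Phi

section Duality

variable {n l : ℕ} {α : Fin (n + 1) → ℝ} {β : Fin (l + 1) → ℝ}
  {Z : Matrix (Fin (l + 1)) (Fin (n + 1)) ℝ}

lemma ofReal_prod_Gamma_mul_lintegral_phiIntegrand (hβ : ∀ j, 0 < β j)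
    (hZ : ∀ j i, 0 < Z j i) :
    ENNReal.ofReal (∏ j, Real.Gamma (β j)) *
        ∫⁻ u in openSimplex n, ENNReal.ofReal (phiIntegrand α β Z u) =
      ENNReal.ofReal (Real.Gamma (∑ j, β j)) *
        ∫⁻ u in openSimplex n, ∫⁻ v in openSimplex l, ENNReal.ofReal (dualKernel α β Z u v) := by
  rw [← lintegral_const_mul' _ _ ENNReal.ofReal_ne_top,
    ← lintegral_const_mul' _ _ ENNReal.ofReal_ne_top]
  refine setLIntegral_congr_fun (measurableSet_openSimplex n) fun u (hu : ∀ i, _) => ?_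
  set x := simplexExt u
  have hw := mulVec_pos hZ hu
  have hA : 0 ≤ ∏ i, x i ^ (α i - 1) := Finset.prod_nonneg fun i _ => by have := hu i; positivity
  calc ENNReal.ofReal (∏ j, Real.Gamma (β j)) *
        ENNReal.ofReal ((∏ i, x i ^ (α i - 1)) * ∏ j, (Z *ᵥ x) j ^ (-β j))
      = ENNReal.ofReal (∏ i, x i ^ (α i - 1)) *
          ENNReal.ofReal (∏ j, Real.Gamma (β j) * (Z *ᵥ x) j ^ (-β j)) := by
        rw [← ENNReal.ofReal_mul (Finset.prod_nonneg fun j _ => (Real.Gamma_pos_of_pos (hβ j)).le),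
          ← ENNReal.ofReal_mul hA, Finset.prod_mul_distrib]
        ring_nf
    _ = ENNReal.ofReal (Real.Gamma (∑ j, β j)) *
          ∫⁻ v in openSimplex l, ENNReal.ofReal (dualKernel α β Z u v) := by
        rw [ofReal_prod_Gamma_mul_rpow_eq_lintegral hβ hw, mul_left_comm,
          ← lintegral_const_mul' _ _ ENNReal.ofReal_ne_top]
        congr 1
        refine setLIntegral_congr_fun (measurableSet_openSimplex l) fun v _ => ?_
        rw [← ENNReal.ofReal_mul hA, dualKernel, mul_assoc]

theorem prod_Gamma_mul_Phi_eq (hα : ∀ i, 0 < α i) (hβ : ∀ j, 0 < β j)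
    (hsum : ∑ i, α i = ∑ j, β j) (hZ : ∀ j i, 0 < Z j i) :
    (∏ j, Real.Gamma (β j)) * Phi n (l + 1) α β Z =
      (∏ i, Real.Gamma (α i)) * Phi l (n + 1) β α Zᵀ := by
  have hZt : ∀ i j, 0 < Zᵀ i j := fun i j => hZ j i
  have key := ofReal_prod_Gamma_mul_lintegral_phiIntegrand (α := α) hβ hZ
  rw [← hsum, lintegral_lintegral_swap (f := fun u v => ENNReal.ofReal (dualKernel α β Z u v))
    (ENNReal.measurable_ofReal.comp (measurable_dualKernel α β Z)).aemeasurable] at key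
  simp only [← dualKernel_transpose hsum,
    ← ofReal_prod_Gamma_mul_lintegral_phiIntegrand hα hZt] at key
  have hreal := congrArg ENNReal.toReal key
  rwa [ENNReal.toReal_mul, ENNReal.toReal_mul,
    ENNReal.toReal_ofReal (Finset.prod_nonneg fun j _ => (Real.Gamma_pos_of_pos (hβ j)).le),
    ENNReal.toReal_ofReal (Finset.prod_nonneg fun i _ => (Real.Gamma_pos_of_pos (hα i)).le),
    ← Phi_eq_toReal_lintegral hZ, ← Phi_eq_toReal_lintegral hZt] at hreal

end Duality

/-- Duality formula: `B(α)⁻¹ Φ(α,β,Z) = B(β)⁻¹ Φ(β,α,Zᵗ)` when `∑ αᵢ = ∑ βⱼ`. -/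
theorem hypergeometric_duality (n l : ℕ) (α : Fin (n + 1) → ℝ) (β : Fin (l + 1) → ℝ)
    (hα : ∀ i, 0 < α i) (hβ : ∀ j, 0 < β j) (hsum : ∑ i, α i = ∑ j, β j)
    (Z : Matrix (Fin (l + 1)) (Fin (n + 1)) ℝ) (hZ : ∀ j i, 0 < Z j i) :
    (Bfun α)⁻¹ * Phi n (l + 1) α β Z = (Bfun β)⁻¹ * Phi l (n + 1) β α Z.transpose := by
  have hΓα : ∏ i, Real.Gamma (α i) ≠ 0 :=
    Finset.prod_ne_zero_iff.2 fun i _ => (Real.Gamma_pos_of_pos (hα i)).ne'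
  have hΓβ : ∏ j, Real.Gamma (β j) ≠ 0 :=
    Finset.prod_ne_zero_iff.2 fun j _ => (Real.Gamma_pos_of_pos (hβ j)).ne'
  rw [Bfun, Bfun, hsum, inv_div, inv_div]
  field_simp
  linear_combination Real.Gamma (∑ j, β j) * prod_Gamma_mul_Phi_eq hα hβ hsum hZ
end

section
/- Let G = (V,E) be a finite directed graph with arc graph H = (E,K), ω ∈ Ω_K elliptic with invariant probability measure π^ω, and ω̌ the time-reversed environment. For Θ : K → ℝ₊ define Θ̌ : Ǩ → ℝ₊ by Θ̌(ě',ě) = Θ(e,e'). Then ω̌^Θ̌ / ω^Θ = (π^ω)^{div Θ}, where for functions β : A → ℝ₊* and γ : A → ℝ, β^γ := ∏_{a∈A} β(a)^{γ(a)}, and div(Θ)(e) = Σ_{e' : (e,e')∈K} Θ(e,e') − Σ_{e' : (e',e)∈K} Θ(e',e). -/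
/-! Since `π e * ω e e' / π e' = (π e / π e') * ω e e'`, the `ω`-powers (positive, as `Θ`
vanishes off `K`) cancel from the ratio; collecting the remaining `π`-factors by the source
and the target of each arc yields the divergence. -/

open Finset

lemma Real.mul_div_rpow_of_pos_or {a b c t : ℝ} (ha : 0 ≤ a) (hc : 0 ≤ c) (hbt : 0 < b ∨ t = 0) :
    (a * b / c) ^ t = (a / c) ^ t * b ^ t := by
  rcases hbt with hb | rfl
  · rw [mul_div_right_comm, Real.mul_rpow (div_nonneg ha hc) hb.le]
  · simp

lemma Real.rpow_pos_of_pos_or {b t : ℝ} (hbt : 0 < b ∨ t = 0) : 0 < b ^ t := by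
  rcases hbt with hb | rfl
  · exact Real.rpow_pos_of_pos hb t
  · simp

/-- Discrete summation by parts, multiplicatively. -/
lemma prod_prod_div_rpow_eq_prod_rpow_divergence {E : Type*} [Fintype E] {π : E → ℝ}
    (hπ : ∀ e, 0 < π e) (Θ : E → E → ℝ) :
    ∏ e, ∏ e', (π e / π e') ^ Θ e e' = ∏ e, π e ^ ((∑ e', Θ e e') - ∑ e', Θ e' e) := by
  have hsource : ∏ e, ∏ e', π e ^ Θ e e' = ∏ e, π e ^ ∑ e', Θ e e' :=
    prod_congr rfl fun e _ => (Real.rpow_sum_of_pos (hπ e) _ _).symm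
  have htarget : ∏ e, ∏ e', π e' ^ Θ e e' = ∏ e, π e ^ ∑ e', Θ e' e := by
    rw [prod_comm]
    exact prod_congr rfl fun e _ => (Real.rpow_sum_of_pos (hπ e) _ _).symm
  simp_rw [Real.div_rpow (hπ _).le (hπ _).le, prod_div_distrib, hsource, htarget,
    Real.rpow_sub (hπ _), prod_div_distrib]

theorem reversed_power_ratio_general {E : Type*} [Fintype E]
    (K : E → E → Prop) (ω : E → E → ℝ)
    (hpos : ∀ e e', K e e' → 0 < ω e e')
    (π : E → ℝ) (hπ : ∀ e, 0 < π e)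
    (Θ : E → E → ℝ) (hΘ0 : ∀ e e', ¬K e e' → Θ e e' = 0) :
    (∏ e, ∏ e', (π e * ω e e' / π e') ^ Θ e e') / (∏ e, ∏ e', ω e e' ^ Θ e e')
      = ∏ e, π e ^ ((∑ e', Θ e e') - ∑ e', Θ e' e) := by
  have hsupp : ∀ e e', 0 < ω e e' ∨ Θ e e' = 0 := fun e e' =>
    (em (K e e')).imp (hpos e e') (hΘ0 e e')
  have hω : 0 < ∏ e, ∏ e', ω e e' ^ Θ e e' :=
    prod_pos fun e _ => prod_pos fun e' _ => Real.rpow_pos_of_pos_or (hsupp e e')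
  rw [div_eq_iff hω.ne', ← prod_prod_div_rpow_eq_prod_rpow_divergence hπ, ← prod_mul_distrib]
  refine prod_congr rfl fun e _ => ?_
  rw [← prod_mul_distrib]
  exact prod_congr rfl fun e' _ =>
    Real.mul_div_rpow_of_pos_or (hπ e).le (hπ e').le (hsupp e e')

/-- `ω̌^Θ̌ / ω^Θ = (π^ω)^{div Θ}`: for `Θ : K → ℝ₊` (extended by `0` off the arc set `K`),
the ratio of the `Θ̌`-power of the reversed environment to the `Θ`-power of the
environment equals `π` raised to the divergence of `Θ`. -/
theorem reversed_power_ratio {E : Type*} [Fintype E]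
    (K : E → E → Prop) (ω : E → E → ℝ)
    (hpos : ∀ e e', K e e' → 0 < ω e e') (hzero : ∀ e e', ¬K e e' → ω e e' = 0)
    (hrow : ∀ e, ∑ e', ω e e' = 1)
    (π : E → ℝ) (hπ : ∀ e, 0 < π e) (hπ1 : ∑ e, π e = 1)
    (hinv : ∀ e', ∑ e, π e * ω e e' = π e')
    (Θ : E → E → ℝ) (hΘ : ∀ e e', 0 ≤ Θ e e') (hΘ0 : ∀ e e', ¬K e e' → Θ e e' = 0) :
    (∏ e, ∏ e', (π e * ω e e' / π e') ^ Θ e e') / (∏ e, ∏ e', ω e e' ^ Θ e e')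
      = ∏ e, π e ^ ((∑ e', Θ e e') - ∑ e', Θ e' e) :=
  reversed_power_ratio_general K ω hpos π hπ Θ hΘ0
end

section
/- Let θ : E_N → ℝ₊ be a flow on the directed edge set E_N of the d-dimensional torus of side N, satisfying: (i) div(θ)(y) = (m/N^d) Σ_{x∈V_N}(δ_0 − δ_x)(y) for all vertices y (total flow from 0 of strength m), (ii) 0 ≤ θ(e) ≤ c(e) where c is a capacity function, and Σ_{e∈E_N} θ(e)² < c₁. Fix an edge e₀ with head(e₀) = 0 and define Θ : K_N → ℝ₊ on the arc graph by Θ(e,e') = (θ(e) + m·1_{e=e₀})(θ(e') + m/(dN^d)) / (θ̄_{head(e)} + m/N^d), where θ̄_x = Σ_{tail(e')=x} θ(e') denotes the total θ-weight exiting the vertex x. Then the total incoming arc-flow at e' satisfies Θ̲_{e'} := Σ_{e : (e,e')∈K_N} Θ(e,e') = θ(e') + m/(dN^d) for every e' ∈ E_N. -/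
set_option maxHeartbeats 1000000
set_option synthInstance.maxHeartbeats 400000


open Finset

/-- Vertices of the `d`-dimensional torus of side `N`. -/
abbrev TVert (N d : ℕ) := Fin d → ZMod N

/-- Directed nearest-neighbor edges of the torus: a tail vertex, a coordinate direction,
and an orientation (`true` = `+eᵢ`, `false` = `-eᵢ`). -/
abbrev TEdge (N d : ℕ) := (Fin d → ZMod N) × Fin d × Bool

def tailE {N d : ℕ} (e : TEdge N d) : TVert N d := e.1

def headE {N d : ℕ} (e : TEdge N d) : TVert N d :=
  fun j => e.1 j + (if j = e.2.1 then (if e.2.2 then 1 else -1) else 0)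

/-- `θ̄_x`: total `θ`-weight exiting vertex `x`. -/
noncomputable def thetaBar {N d : ℕ} [NeZero N] (θ : TEdge N d → ℝ) (x : TVert N d) : ℝ :=
  ∑ e ∈ univ.filter (fun e => tailE e = x), θ e

/-- Divergence of `θ` at a vertex. -/
noncomputable def divTheta {N d : ℕ} [NeZero N] (θ : TEdge N d → ℝ) (x : TVert N d) : ℝ :=
  (∑ e ∈ univ.filter (fun e => tailE e = x), θ e)
    - ∑ e ∈ univ.filter (fun e => headE e = x), θ e

/-- The arc-graph flow `Θ(e,e')` constructed from `θ`. -/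
noncomputable def ThetaArc {N d : ℕ} [NeZero N] (θ : TEdge N d → ℝ) (m : ℝ) (e₀ : TEdge N d)
    (e e' : TEdge N d) : ℝ :=
  (θ e + (if e = e₀ then m else 0)) * (θ e' + m / ((d : ℝ) * (N : ℝ) ^ d)) /
    (thetaBar θ (headE e) + m / (N : ℝ) ^ d)

/-- The total incoming arc-flow at `e'` satisfies `Θ̲_{e'} = θ(e') + m/(dN^d)`. -/
theorem arc_flow_incoming (N d : ℕ) [NeZero N] (hd : 1 ≤ d)
    (m c₁ : ℝ) (hm : 0 < m) (θ c : TEdge N d → ℝ)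
    (hθ0 : ∀ e, 0 ≤ θ e) (hθc : ∀ e, θ e ≤ c e) (hL2 : ∑ e, θ e ^ 2 < c₁)
    (hflow : ∀ x : TVert N d,
      divTheta θ x = m * (if x = 0 then 1 else 0) - m / (N : ℝ) ^ d)
    (e₀ : TEdge N d) (he₀ : headE e₀ = 0) :
    ∀ e' : TEdge N d,
      ∑ e ∈ univ.filter (fun e => headE e = tailE e'), ThetaArc θ m e₀ e e'
        = θ e' + m / ((d : ℝ) * (N : ℝ) ^ d) := by
  intro e'
  have hN : (0:ℝ) < (N:ℝ) ^ d := by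
    have : (0:ℝ) < (N:ℝ) := by exact_mod_cast Nat.pos_of_ne_zero (NeZero.ne N)
    positivity
  set x := tailE e' with hx
  have hD : 0 < thetaBar θ x + m / (N : ℝ) ^ d := by
    have h1 : 0 ≤ thetaBar θ x := Finset.sum_nonneg fun e _ => hθ0 e
    have h2 : 0 < m / (N : ℝ) ^ d := div_pos hm hN
    linarith
  have hsum : ∑ e ∈ univ.filter (fun e => headE e = x), (θ e + if e = e₀ then m else 0)
      = thetaBar θ x + m / (N : ℝ) ^ d := by
    rw [Finset.sum_add_distrib, Finset.sum_ite_eq']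
    have hmem : (e₀ ∈ univ.filter (fun e => headE e = x)) ↔ x = 0 := by
      simp [he₀, eq_comm]
    rw [if_congr hmem rfl rfl]
    have hflowx := hflow x
    unfold divTheta at hflowx
    unfold thetaBar
    split_ifs at hflowx ⊢ <;> linarith
  have hcongr : ∀ e ∈ univ.filter (fun e => headE e = x),
      ThetaArc θ m e₀ e e' = (θ e + if e = e₀ then m else 0) *
        (θ e' + m / ((d : ℝ) * (N : ℝ) ^ d)) / (thetaBar θ x + m / (N : ℝ) ^ d) := by
    intro e he
    rw [Finset.mem_filter] at he
    rw [ThetaArc, he.2]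
  rw [Finset.sum_congr rfl hcongr, ← Finset.sum_div, ← Finset.sum_mul, hsum]
  rw [mul_comm, mul_div_assoc, div_self (ne_of_gt hD), mul_one]
end

section
/- Let Θ be defined as in the min-cut total flow construction with θ ≤ c pointwise and Σ_e θ(e)² < c₁. Then Θ(e,e') ≤ θ(e) + m·1_{e=e₀} for every arc (e,e'), and Σ_{(e,e')∈K_N} Θ(e,e')² ≤ 2d·c₁ + 2d(c(e₀) + m)² (a bound on the L² norm independent of N, for fixed m). -/
open Finset

theorem Fintype.sum_sq_add_ite_le {ι : Type*} [Fintype ι] [DecidableEq ι] (f : ι → ℝ) (i₀ : ι)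
    {m c : ℝ} (hf : 0 ≤ f i₀) (hm : 0 ≤ m) (hc : f i₀ ≤ c) :
    ∑ i, (f i + if i = i₀ then m else 0) ^ 2 ≤ ∑ i, f i ^ 2 + (c + m) ^ 2 := by
  have hrest : ∑ i ∈ {i₀}ᶜ, (f i + if i = i₀ then m else 0) ^ 2 = ∑ i ∈ {i₀}ᶜ, f i ^ 2 :=
    Finset.sum_congr rfl fun i hi => by rw [if_neg (by simpa using hi), add_zero]
  have hbump : (f i₀ + m) ^ 2 ≤ (c + m) ^ 2 := by gcongr
  rw [Fintype.sum_eq_add_sum_compl i₀, Fintype.sum_eq_add_sum_compl i₀ (f · ^ 2), if_pos rfl, hrest]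
  linarith [sq_nonneg (f i₀)]

section Torus

variable {N d : ℕ} [NeZero N]

theorem card_filter_tailE_eq (x : TVert N d) :
    #(univ.filter fun e : TEdge N d => tailE e = x) = 2 * d := by
  have hout : univ.filter (fun e : TEdge N d => tailE e = x) = {x} ×ˢ univ := by
    ext ⟨y, q⟩
    simp [tailE, eq_comm]
  simp [hout, mul_comm]

variable {θ : TEdge N d → ℝ}

theorem thetaBar_nonneg (hθ : ∀ e, 0 ≤ θ e) (x : TVert N d) : 0 ≤ thetaBar θ x :=
  sum_nonneg fun e _ => hθ e

theorem le_thetaBar_tailE (hθ : ∀ e, 0 ≤ θ e) (e : TEdge N d) : θ e ≤ thetaBar θ (tailE e) :=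
  single_le_sum (fun e _ => hθ e) (by simp)

variable {m : ℝ} (hθ : ∀ e, 0 ≤ θ e) (hm : 0 ≤ m) (e₀ : TEdge N d)
include hθ hm

theorem thetaArc_nonneg (e e' : TEdge N d) : 0 ≤ ThetaArc θ m e₀ e e' :=
  div_nonneg
    (mul_nonneg (add_nonneg (hθ e) (ite_nonneg hm le_rfl)) (add_nonneg (hθ e') (by positivity)))
    (add_nonneg (thetaBar_nonneg hθ _) (by positivity))

/-- The weight `θ e' + m / (d N^d)` is one of the `2d` summands of `θ̄_{head e} + m / N^d`,
so the ratio in `Θ(e,e')` is at most `1`. -/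
theorem thetaArc_le {e e' : TEdge N d} (h : headE e = tailE e') :
    ThetaArc θ m e₀ e e' ≤ θ e + if e = e₀ then m else 0 := by
  have hd : (1 : ℝ) ≤ d := by exact_mod_cast e'.2.1.pos
  have hN : (0 : ℝ) < (N : ℝ) ^ d := by have := NeZero.pos N; positivity
  have hshare : m / ((d : ℝ) * (N : ℝ) ^ d) ≤ m / (N : ℝ) ^ d :=
    div_le_div_of_nonneg_left hm hN (le_mul_of_one_le_left hN.le hd)
  have hratio : θ e' + m / ((d : ℝ) * (N : ℝ) ^ d) ≤ thetaBar θ (headE e) + m / (N : ℝ) ^ d := by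
    rw [h]; linarith [le_thetaBar_tailE hθ e']
  rw [ThetaArc, mul_div_assoc]
  exact mul_le_of_le_one_right (add_nonneg (hθ e) (ite_nonneg hm le_rfl))
    (div_le_one_of_le₀ hratio ((add_nonneg (hθ e') (by positivity)).trans hratio))

theorem sum_thetaArc_sq_le (e : TEdge N d) :
    ∑ e' ∈ univ.filter (fun e' => tailE e' = headE e), ThetaArc θ m e₀ e e' ^ 2
      ≤ 2 * (d : ℝ) * (θ e + if e = e₀ then m else 0) ^ 2 := by
  calc ∑ e' ∈ univ.filter (fun e' => tailE e' = headE e), ThetaArc θ m e₀ e e' ^ 2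
      ≤ ∑ e' ∈ univ.filter (fun e' => tailE e' = headE e), (θ e + if e = e₀ then m else 0) ^ 2 :=
        sum_le_sum fun e' he' => pow_le_pow_left₀ (thetaArc_nonneg hθ hm e₀ e e')
          (thetaArc_le hθ hm e₀ (mem_filter.mp he').2.symm) 2
    _ = 2 * (d : ℝ) * (θ e + if e = e₀ then m else 0) ^ 2 := by
        rw [sum_const, card_filter_tailE_eq, nsmul_eq_mul]
        push_cast; ring

end Torus

theorem arc_flow_L2_bound_general (N d : ℕ) [NeZero N]
    (m c₁ : ℝ) (hm : 0 < m) (θ c : TEdge N d → ℝ)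
    (hθ0 : ∀ e, 0 ≤ θ e) (hθc : ∀ e, θ e ≤ c e) (hL2 : ∑ e, θ e ^ 2 < c₁)
    (e₀ : TEdge N d) :
    (∀ e e' : TEdge N d, headE e = tailE e' →
      ThetaArc θ m e₀ e e' ≤ θ e + (if e = e₀ then m else 0)) ∧
    (∑ e : TEdge N d,
        ∑ e' ∈ univ.filter (fun e' => tailE e' = headE e), ThetaArc θ m e₀ e e' ^ 2)
      ≤ 2 * (d : ℝ) * c₁ + 2 * (d : ℝ) * (c e₀ + m) ^ 2 := by
  refine ⟨fun e e' h => thetaArc_le hθ0 hm.le e₀ h, ?_⟩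
  calc ∑ e : TEdge N d,
        ∑ e' ∈ univ.filter (fun e' => tailE e' = headE e), ThetaArc θ m e₀ e e' ^ 2
      ≤ ∑ e : TEdge N d, 2 * (d : ℝ) * (θ e + if e = e₀ then m else 0) ^ 2 :=
        sum_le_sum fun e _ => sum_thetaArc_sq_le hθ0 hm.le e₀ e
    _ = 2 * (d : ℝ) * ∑ e : TEdge N d, (θ e + if e = e₀ then m else 0) ^ 2 := by
        rw [mul_sum]
    _ ≤ 2 * (d : ℝ) * (c₁ + (c e₀ + m) ^ 2) := by
        gcongr
        linarith [Fintype.sum_sq_add_ite_le θ e₀ (hθ0 e₀) hm.le (hθc e₀)]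
    _ = 2 * (d : ℝ) * c₁ + 2 * (d : ℝ) * (c e₀ + m) ^ 2 := by ring

/-- Pointwise bound `Θ(e,e') ≤ θ(e) + m·1_{e=e₀}` on arcs, and the `L²` bound
`∑_{(e,e')∈K_N} Θ(e,e')² ≤ 2d·c₁ + 2d(c(e₀)+m)²`, uniform in `N`. -/
theorem arc_flow_L2_bound (N d : ℕ) [NeZero N] (hd : 1 ≤ d)
    (m c₁ : ℝ) (hm : 0 < m) (θ c : TEdge N d → ℝ)
    (hθ0 : ∀ e, 0 ≤ θ e) (hθc : ∀ e, θ e ≤ c e) (hL2 : ∑ e, θ e ^ 2 < c₁)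
    (hflow : ∀ x : TVert N d,
      divTheta θ x = m * (if x = 0 then 1 else 0) - m / (N : ℝ) ^ d)
    (e₀ : TEdge N d) (he₀ : headE e₀ = 0) :
    (∀ e e' : TEdge N d, headE e = tailE e' →
      ThetaArc θ m e₀ e e' ≤ θ e + (if e = e₀ then m else 0)) ∧
    (∑ e : TEdge N d,
        ∑ e' ∈ univ.filter (fun e' => tailE e' = headE e), ThetaArc θ m e₀ e e' ^ 2)
      ≤ 2 * (d : ℝ) * c₁ + 2 * (d : ℝ) * (c e₀ + m) ^ 2 :=
  arc_flow_L2_bound_general N d m c₁ hm θ c hθ0 hθc hL2 e₀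
end
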